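/- For complex s and a, b with Re(s) > max(1, Re(a)+1, Re(b)+1, Re(a+b)+1), ∑_{n=1}^∞ σ_a(n)σ_b(n)/n^s = ζ(s)ζ(s−a)ζ(s−b)ζ(s−a−b)/ζ(2s−a−b). -/

import Mathlib

/-!
All functions involved are multiplicative, so it suffices to compare their Bell series
`∑ₖ f(pᵏ) Xᵏ`, which turn Dirichlet convolution into multiplication of power series. With
`x = p^a`, `y = p^b`, the Bell series of `σ_a σ_b` is
`(1 - x y X²) / ((1 - X) (1 - x X) (1 - y X) (1 - x y X))`. The numerator is the Bell series of
the function supported on squares with `m² ↦ μ(m) m^(a+b)`, whose Dirichlet series is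
`1 / ζ(2s - a - b)`; the four denominators are those of `ζ(s)`, `ζ(s - a)`, `ζ(s - b)` and
`ζ(s - a - b)`.
-/

open PowerSeries

theorem Nat.Coprime.isSquare_of_isSquare_mul {m n : ℕ} (h : m.Coprime n)
    (hmn : IsSquare (m * n)) : IsSquare m := by
  obtain ⟨r, hr⟩ := hmn
  obtain ⟨d, rfl⟩ := exists_eq_pow_of_mul_eq_pow (Nat.isUnit_iff.mpr h) (hr.trans (sq r).symm)
  exact IsSquare.sq d

theorem Nat.Prime.isSquare_pow_iff {p k : ℕ} (hp : p.Prime) : IsSquare (p ^ k) ↔ Even k := by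
  refine ⟨fun ⟨r, hr⟩ => ?_, fun hk => hk.isSquare_pow p⟩
  obtain ⟨j, -, rfl⟩ := (Nat.dvd_prime_pow hp).1 (Dvd.intro _ hr.symm)
  rw [← pow_add] at hr
  exact ⟨j, Nat.pow_right_injective hp.two_le hr⟩

namespace PowerSeries

variable {R : Type*} [CommRing R]

theorem mk_mul_one_sub_C_mul_X {c d : ℕ → R} {r : R} (h0 : c 0 = d 0)
    (hsucc : ∀ n, c (n + 1) - r * c n = d (n + 1)) : mk c * (1 - C r * X) = mk d := by
  ext (_ | n)
  · simp [h0]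
  · simp [mul_sub, ← mul_assoc, ← hsucc, mul_comm]

theorem mk_pow_mul_one_sub_C_mul_X (r : R) : mk (r ^ ·) * (1 - C r * X) = 1 := by
  simpa [rescale_mk, rescale_X] using congrArg (rescale r) (mk_one_mul_one_sub_eq_one R)

theorem mk_geom_sum_mul_one_sub_X (r : R) :
    mk (fun k => ∑ i ∈ Finset.range (k + 1), r ^ i) * (1 - X) = mk (r ^ ·) := by
  simpa using mk_mul_one_sub_C_mul_X (r := 1) (c := fun k => ∑ i ∈ Finset.range (k + 1), r ^ i)
    (d := (r ^ ·)) (by simp) fun n => by simp [geom_sum_succ' (n := n + 1)]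

theorem mk_geom_sum_mul_geom_sum_mul_prod (x y : R) :
    mk (fun k => (∑ i ∈ Finset.range (k + 1), x ^ i) * ∑ i ∈ Finset.range (k + 1), y ^ i) *
      ((1 - X) * (1 - C x * X) * (1 - C y * X) * (1 - C (x * y) * X)) =
        1 - C (x * y) * X ^ 2 := by
  set g : R → R⟦X⟧ := fun r => mk fun k => ∑ i ∈ Finset.range (k + 1), r ^ i
  have hxy : mk (fun k => (∑ i ∈ Finset.range (k + 1), x ^ i) *
      ∑ i ∈ Finset.range (k + 1), y ^ i) * (1 - C (x * y) * X) = g x + g y - mk 1 := by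
    rw [show g x + g y - mk 1 = mk fun k => (∑ i ∈ Finset.range (k + 1), x ^ i) +
      (∑ i ∈ Finset.range (k + 1), y ^ i) - 1 by ext; simp [g]]
    refine mk_mul_one_sub_C_mul_X (by simp) fun n => ?_
    simp only [geom_sum_succ (n := n + 1)]
    ring
  calc
    _ = (g x * (1 - X)) * (1 - C x * X) * (1 - C y * X)
        + (g y * (1 - X)) * (1 - C y * X) * (1 - C x * X)
        - (mk 1 * (1 - X)) * (1 - C x * X) * (1 - C y * X) := by
      linear_combination (1 - X) * (1 - C x * X) * (1 - C y * X) * hxy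
    _ = (mk (x ^ ·) * (1 - C x * X)) * (1 - C y * X)
        + (mk (y ^ ·) * (1 - C y * X)) * (1 - C x * X) - (1 - C x * X) * (1 - C y * X) := by
      simp only [g, mk_geom_sum_mul_one_sub_X, mk_one_mul_one_sub_eq_one, one_mul]
    _ = _ := by simp only [mk_pow_mul_one_sub_C_mul_X, map_mul]; ring

theorem mk_geom_sum_mul_geom_sum (x y : R) :
    mk (fun k => (∑ i ∈ Finset.range (k + 1), x ^ i) * ∑ i ∈ Finset.range (k + 1), y ^ i) =
      (1 - C (x * y) * X ^ 2) * (mk 1 * mk (x ^ ·) * mk (y ^ ·) * mk ((x * y) ^ ·)) := by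
  have hinv : (mk 1 * mk (x ^ ·) * mk (y ^ ·) * mk ((x * y) ^ ·)) *
      ((1 - X) * (1 - C x * X) * (1 - C y * X) * (1 - C (x * y) * X)) = 1 := by
    calc
      _ = (mk 1 * (1 - X)) * (mk (x ^ ·) * (1 - C x * X)) * (mk (y ^ ·) * (1 - C y * X))
          * (mk ((x * y) ^ ·) * (1 - C (x * y) * X)) := by ring
      _ = 1 := by simp only [mk_one_mul_one_sub_eq_one, mk_pow_mul_one_sub_C_mul_X, mul_one]
  rw [← mk_geom_sum_mul_geom_sum_mul_prod]
  linear_combination (-mk (fun k => (∑ i ∈ Finset.range (k + 1), x ^ i) *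
    ∑ i ∈ Finset.range (k + 1), y ^ i)) * hinv

end PowerSeries

namespace ArithmeticFunction

open scoped Moebius ArithmeticFunction.zeta LSeries.notation

variable {R : Type*}

def bellSeries [Semiring R] (p : ℕ) (f : ArithmeticFunction R) : R⟦X⟧ :=
  mk fun k => f (p ^ k)

@[simp]
theorem coeff_bellSeries [Semiring R] (p k : ℕ) (f : ArithmeticFunction R) :
    coeff k (bellSeries p f) = f (p ^ k) :=
  coeff_mk _ _

theorem bellSeries_mul [Semiring R] {p : ℕ} (hp : p.Prime) (f g : ArithmeticFunction R) :
    bellSeries p (f * g) = bellSeries p f * bellSeries p g := by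
  ext k
  rw [coeff_bellSeries, coeff_mul, Finset.Nat.sum_antidiagonal_eq_sum_range_succ
    (fun i j => coeff i (bellSeries p f) * coeff j (bellSeries p g)), mul_apply,
    Nat.sum_divisorsAntidiagonal (f · * g ·), Nat.sum_divisors_prime_pow hp]
  refine Finset.sum_congr rfl fun i hi => ?_
  rw [Nat.pow_div (Finset.mem_range_succ_iff.mp hi) hp.pos, coeff_bellSeries, coeff_bellSeries]

theorem IsMultiplicative.eq_of_bellSeries_eq [CommSemiring R] {f g : ArithmeticFunction R}
    (hf : f.IsMultiplicative) (hg : g.IsMultiplicative)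
    (h : ∀ p, p.Prime → bellSeries p f = bellSeries p g) : f = g :=
  (eq_iff_eq_on_prime_powers f hf g hg).2 fun p k hp => by
    simpa using congrArg (coeff k) (h p hp)

def onSquares [Zero R] (f : ArithmeticFunction R) : ArithmeticFunction R :=
  ⟨fun n => if IsSquare n then f (Nat.sqrt n) else 0, by simp⟩

theorem onSquares_apply_sq [Zero R] (f : ArithmeticFunction R) (m : ℕ) :
    onSquares f (m ^ 2) = f m := by
  simp [onSquares, IsSquare.sq, Nat.sqrt_eq']

theorem onSquares_apply_of_not_isSquare [Zero R] (f : ArithmeticFunction R) {n : ℕ}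
    (hn : ¬ IsSquare n) : onSquares f n = 0 := by
  simp [onSquares, hn]

theorem IsMultiplicative.onSquares [MonoidWithZero R] {f : ArithmeticFunction R}
    (hf : f.IsMultiplicative) : (onSquares f).IsMultiplicative := by
  refine ⟨by simpa [hf.map_one] using onSquares_apply_sq f 1, fun {m n} hmn => ?_⟩
  by_cases hsq : IsSquare m ∧ IsSquare n
  · obtain ⟨⟨u, rfl⟩, ⟨v, rfl⟩⟩ := hsq
    simp only [← sq, ← mul_pow, onSquares_apply_sq] at hmn ⊢
    exact hf.map_mul_of_coprime
      ((Nat.coprime_pow_left_iff two_pos _ _).1 ((Nat.coprime_pow_right_iff two_pos _ _).1 hmn))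
  · have hmn' : ¬ IsSquare (m * n) := fun h => hsq
      ⟨hmn.isSquare_of_isSquare_mul h, hmn.symm.isSquare_of_isSquare_mul (mul_comm m n ▸ h)⟩
    rcases not_and_or.1 hsq with h | h <;> simp [onSquares_apply_of_not_isSquare f, h, hmn']

theorem onSquares_apply_prime_pow [Zero R] (f : ArithmeticFunction R) {p : ℕ} (hp : p.Prime)
    (k : ℕ) : onSquares f (p ^ k) = if Even k then f (p ^ (k / 2)) else 0 := by
  split_ifs with hk
  · obtain ⟨j, rfl⟩ := hk
    rw [← two_mul, Nat.mul_div_cancel_left j two_pos, pow_mul', onSquares_apply_sq]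
  · exact onSquares_apply_of_not_isSquare f (hp.isSquare_pow_iff.not.2 hk)

noncomputable def cpow (c : ℂ) : ArithmeticFunction ℂ :=
  ⟨fun n => if n = 0 then 0 else (n : ℂ) ^ c, if_pos rfl⟩

theorem cpow_apply {c : ℂ} {n : ℕ} (hn : n ≠ 0) : cpow c n = (n : ℂ) ^ c :=
  if_neg hn

theorem isMultiplicative_cpow (c : ℂ) : (cpow c).IsMultiplicative := by
  refine IsMultiplicative.iff_ne_zero.2 ⟨by simp [cpow_apply], fun {m n} hm hn _ => ?_⟩
  rw [cpow_apply (mul_ne_zero hm hn), cpow_apply hm, cpow_apply hn, Nat.cast_mul,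
    Complex.natCast_mul_natCast_cpow]

theorem cpow_apply_prime_pow (c : ℂ) {p : ℕ} (hp : p.Prime) (k : ℕ) :
    cpow c (p ^ k) = ((p : ℂ) ^ c) ^ k := by
  rw [cpow_apply (pow_ne_zero k hp.ne_zero), Nat.cast_pow, ← Complex.natCast_cpow_natCast_mul,
    Complex.cpow_nat_mul]

theorem bellSeries_cpow (c : ℂ) {p : ℕ} (hp : p.Prime) :
    bellSeries p (cpow c) = mk (((p : ℂ) ^ c) ^ ·) := by
  ext k
  rw [coeff_bellSeries, coeff_mk, cpow_apply_prime_pow c hp]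

theorem bellSeries_zeta {p : ℕ} (hp : p.Prime) :
    bellSeries p (ζ : ArithmeticFunction ℂ) = mk 1 := by
  ext k
  simp [hp.ne_zero]

noncomputable def csigma (c : ℂ) : ArithmeticFunction ℂ := ζ * cpow c

theorem csigma_apply (c : ℂ) (n : ℕ) : csigma c n = ∑ d ∈ n.divisors, (d : ℂ) ^ c :=
  coe_zeta_mul_apply.trans <|
    Finset.sum_congr rfl fun _ hd => cpow_apply (Nat.pos_of_mem_divisors hd).ne'

theorem isMultiplicative_csigma (c : ℂ) : (csigma c).IsMultiplicative :=
  isMultiplicative_zeta.natCast.mul (isMultiplicative_cpow c)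

theorem csigma_apply_prime_pow (c : ℂ) {p : ℕ} (hp : p.Prime) (k : ℕ) :
    csigma c (p ^ k) = ∑ i ∈ Finset.range (k + 1), ((p : ℂ) ^ c) ^ i := by
  rw [csigma, coe_zeta_mul_apply, Nat.sum_divisors_prime_pow hp]
  exact Finset.sum_congr rfl fun i _ => cpow_apply_prime_pow c hp i

theorem bellSeries_onSquares_moebius_pmul_cpow (c : ℂ) {p : ℕ} (hp : p.Prime) :
    bellSeries p (onSquares ((μ : ArithmeticFunction ℂ).pmul (cpow c))) =
      1 - C ((p : ℂ) ^ c) * X ^ 2 := by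
  ext k
  rw [coeff_bellSeries, onSquares_apply_prime_pow _ hp, map_sub, coeff_one, coeff_C_mul_X_pow]
  rcases Nat.even_or_odd' k with ⟨j, rfl | rfl⟩
  · rw [if_pos (even_two_mul j), Nat.mul_div_cancel_left j two_pos, pmul_apply, intCoe_apply,
      cpow_apply_prime_pow c hp]
    rcases j with _ | _ | j
    · simp
    · simp [moebius_apply_prime hp]
    · simp [moebius_apply_prime_pow hp, show 2 * (j + 2) ≠ 2 by omega]
  · rw [if_neg (Nat.not_even_two_mul_add_one j), if_neg (by omega), if_neg (by omega)]
    simp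

theorem csigma_pmul_csigma (a b : ℂ) :
    (csigma a).pmul (csigma b) = onSquares ((μ : ArithmeticFunction ℂ).pmul (cpow (a + b))) *
      (ζ * cpow a * cpow b * cpow (a + b)) := by
  have hmul := (isMultiplicative_moebius.intCast.pmul (isMultiplicative_cpow (a + b))).onSquares.mul
    (((isMultiplicative_zeta.natCast.mul (isMultiplicative_cpow a)).mul
      (isMultiplicative_cpow b)).mul (isMultiplicative_cpow (a + b)))
  refine ((isMultiplicative_csigma a).pmul (isMultiplicative_csigma b)).eq_of_bellSeries_eq hmul
    fun p hp => ?_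
  have hpab : (p : ℂ) ^ (a + b) = (p : ℂ) ^ a * (p : ℂ) ^ b :=
    Complex.cpow_add _ _ (Nat.cast_ne_zero.2 hp.ne_zero)
  simp only [bellSeries_mul hp, bellSeries_onSquares_moebius_pmul_cpow _ hp, bellSeries_zeta hp,
    bellSeries_cpow _ hp, hpab]
  rw [← mk_geom_sum_mul_geom_sum]
  ext k
  simp [csigma_apply_prime_pow _ hp]

open LSeries

theorem term_pmul_cpow (f : ArithmeticFunction ℂ) (c s : ℂ) (n : ℕ) :
    term ↗(f.pmul (cpow c)) s n = term ↗f (s - c) n := by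
  rcases eq_or_ne n 0 with rfl | hn
  · simp
  rw [term_of_ne_zero hn, term_of_ne_zero hn, pmul_apply, cpow_apply hn,
    Complex.cpow_sub _ _ (Nat.cast_ne_zero.2 hn), div_div_eq_mul_div]

theorem _root_.LSeriesHasSum.pmul_cpow {f : ArithmeticFunction ℂ} {c s a : ℂ}
    (hf : LSeriesHasSum ↗f (s - c) a) : LSeriesHasSum ↗(f.pmul (cpow c)) s a := by
  unfold LSeriesHasSum at *
  rwa [funext (term_pmul_cpow f c s)]

theorem term_onSquares_sq (f : ArithmeticFunction ℂ) (s : ℂ) (m : ℕ) :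
    term ↗(onSquares f) s (m ^ 2) = term ↗f (2 * s) m := by
  rcases eq_or_ne m 0 with rfl | hm
  · simp
  rw [term_of_ne_zero (pow_ne_zero 2 hm), term_of_ne_zero hm, onSquares_apply_sq, Nat.cast_pow,
    ← Complex.natCast_cpow_natCast_mul, Nat.cast_ofNat]

theorem _root_.LSeriesHasSum.onSquares {f : ArithmeticFunction ℂ} {s a : ℂ}
    (hf : LSeriesHasSum ↗f (2 * s) a) : LSeriesHasSum ↗(onSquares f) s a := by
  refine (Function.Injective.hasSum_iff (Nat.pow_left_injective two_ne_zero) fun n hn => ?_).1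
    (by simpa [LSeriesHasSum, Function.comp_def, term_onSquares_sq] using hf)
  rw [term_def, onSquares_apply_of_not_isSquare f fun ⟨r, hr⟩ => hn ⟨r, by simp [hr, sq]⟩]
  simp

theorem LSeriesHasSum_natCast_zeta {s : ℂ} (hs : 1 < s.re) :
    LSeriesHasSum ↗(ζ : ArithmeticFunction ℂ) s (riemannZeta s) := by
  simpa using LSeriesHasSum_zeta hs

theorem LSeriesHasSum_cpow {c s : ℂ} (hs : 1 < (s - c).re) :
    LSeriesHasSum ↗(cpow c) s (riemannZeta (s - c)) :=
  zeta_pmul (cpow c) ▸ (LSeriesHasSum_natCast_zeta hs).pmul_cpow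

theorem LSeriesHasSum_intCast_moebius {s : ℂ} (hs : 1 < s.re) :
    LSeriesHasSum ↗(μ : ArithmeticFunction ℂ) s (riemannZeta s)⁻¹ := by
  have h := LSeries_one_mul_Lseries_moebius hs
  rw [LSeries_one_eq_riemannZeta hs] at h
  simpa [eq_inv_of_mul_eq_one_right h] using (LSeriesSummable_moebius_iff.2 hs).LSeriesHasSum

theorem LSeriesHasSum_csigma_pmul_csigma {s a b : ℂ} (hs : 1 < s.re) (ha : 1 < (s - a).re)
    (hb : 1 < (s - b).re) (hab : 1 < (s - a - b).re) :
    LSeriesHasSum ↗((csigma a).pmul (csigma b)) s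
      (riemannZeta s * riemannZeta (s - a) * riemannZeta (s - b) * riemannZeta (s - a - b) /
        riemannZeta (2 * s - a - b)) := by
  have h2s : 1 < (2 * s - (a + b)).re := by
    simp only [Complex.sub_re, Complex.add_re, Complex.mul_re] at *
    norm_num
    linarith
  rw [sub_sub s a b] at hab ⊢
  rw [csigma_pmul_csigma, sub_sub, div_eq_inv_mul]
  exact LSeriesHasSum_mul (LSeriesHasSum_intCast_moebius h2s).pmul_cpow.onSquares
    (LSeriesHasSum_mul (LSeriesHasSum_mul (LSeriesHasSum_mul (LSeriesHasSum_natCast_zeta hs)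
      (LSeriesHasSum_cpow ha)) (LSeriesHasSum_cpow hb)) (LSeriesHasSum_cpow hab))

end ArithmeticFunction

theorem ramanujan_identity (s a b : ℂ)
    (hs : max (max 1 (a.re + 1)) (max (b.re + 1) ((a + b).re + 1)) < s.re) :
    ∑' n : ℕ+, ((∑ d ∈ (n : ℕ).divisors, (d : ℂ) ^ a) *
        (∑ d ∈ (n : ℕ).divisors, (d : ℂ) ^ b) / (n : ℕ) ^ s) =
      riemannZeta s * riemannZeta (s - a) * riemannZeta (s - b) *
        riemannZeta (s - a - b) / riemannZeta (2 * s - a - b) := by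
  simp only [max_lt_iff, Complex.add_re] at hs
  obtain ⟨⟨hs1, ha⟩, hb, hab⟩ := hs
  have hsum := ArithmeticFunction.LSeriesHasSum_csigma_pmul_csigma (a := a) (b := b) hs1
    (by rw [Complex.sub_re]; linarith) (by rw [Complex.sub_re]; linarith)
    (by rw [Complex.sub_re, Complex.sub_re]; linarith)
  rw [← hsum.LSeries_eq, LSeries, ← tsum_pnat_eq_tsum_of_eq_zero (LSeries.term_zero _ _)]
  refine tsum_congr fun n => ?_
  rw [LSeries.term_of_ne_zero n.ne_zero, ArithmeticFunction.pmul_apply,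
    ArithmeticFunction.csigma_apply, ArithmeticFunction.csigma_apply]
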